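/- arXiv:1206.3931 — 2 statements merged into one kernel-verified Lean document; each statement's English description precedes it below -/
import Mathlib

section
/- Let k be a perfect field of characteristic p and S/R a degree-p totally ramified extension of complete DVRs over k, generated by α with β := α^p − α ∈ QF(R) and v_R(β) = −1. Then the degree of the different d_{S/R} = 2p − 2. -/
/-!
Statement 4 (paper Lemma `lemma.different`, degree-`p` case):
Let `k` be a perfect field of characteristic `p` and `S/R` a degree-`p` totally
ramified extension of complete DVRs over `k`, generated by `α` with
`β := α^p − α ∈ QF(R)` and `v_R β = −1`. Then the degree of the different is
`2p − 2`: `differentIdeal R S = m_S ^ (2p − 2)`.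
-/

set_option synthInstance.maxHeartbeats 1000000
set_option maxHeartbeats 1000000

open IsLocalRing

/-- `v_R β = −1` for `β ∈ K = QF(R)`: `β · π` is a unit of `R` for a uniformizer `π`. -/
def valIsNegOne (R K : Type*) [CommRing R] [Field K] [Algebra R K] (β : K) : Prop :=
  ∃ (π : R) (u : Rˣ), Irreducible π ∧ β * algebraMap R K π = algebraMap R K (u : R)

/-!
Put `y = α⁻¹` and let `ϖ` be the uniformizer of `R` with `β = ϖ⁻¹`. The Artin–Schreier
equation becomes `y ^ p = ϖ (1 - y ^ (p - 1))`. As `β` is not integral over `R`, `y` lies in the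
maximal ideal of `S`, so `y ^ p` is associated to `ϖ`; total ramification of degree `p` then makes
`y` a uniformizer of `S`, and Nakayama's lemma gives `S = R[y]`. Hence the different is generated
by `g'(y) = -ϖ y ^ (p - 2)` for the minimal polynomial `g = X ^ p + ϖ (X ^ (p - 1) - 1)` of `y`,
an element of valuation `p + (p - 2)`.
-/

open Polynomial IntermediateField

theorem valIsNegOne.exists_irreducible_mul_eq_one {R K : Type*} [CommRing R] [Field K]
    [Algebra R K] {β : K} (h : valIsNegOne R K β) :
    ∃ ϖ : R, Irreducible ϖ ∧ β * algebraMap R K ϖ = 1 := by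
  obtain ⟨π, u, hπ, hβπ⟩ := h
  refine ⟨↑u⁻¹ * π, Associated.irreducible ⟨u⁻¹, mul_comm _ _⟩ hπ, ?_⟩
  rw [map_mul, mul_left_comm, hβπ, ← map_mul, Units.inv_mul, map_one]

theorem not_isIntegral_of_mul_eq_one {R K : Type*} [CommRing R] [IsIntegrallyClosed R] [Field K]
    [Algebra R K] [IsFractionRing R K] {ϖ : R} (hϖ : ¬IsUnit ϖ) {β : K}
    (h : β * algebraMap R K ϖ = 1) : ¬IsIntegral R β := by
  intro hβ
  obtain ⟨r, rfl⟩ := IsIntegrallyClosed.isIntegral_iff.mp hβ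
  rw [← map_mul, ← map_one (algebraMap R K)] at h
  exact hϖ (IsUnit.of_mul_eq_one_right _ (IsFractionRing.injective R K h))

theorem inv_pow_eq_mul_one_sub_inv_pow {L : Type*} [Field L] {p : ℕ} (hp : 0 < p) {α c : L}
    (h : (α ^ p - α) * c = 1) : α⁻¹ ^ p = c * (1 - α⁻¹ ^ (p - 1)) := by
  have hα : α ≠ 0 := by
    rintro rfl
    simp [zero_pow hp.ne'] at h
  obtain ⟨q, rfl⟩ : ∃ q, p = q + 1 := ⟨p - 1, by omega⟩
  calc α⁻¹ ^ (q + 1) = α⁻¹ ^ (q + 1) * ((α ^ (q + 1) - α) * c) := by rw [h, mul_one]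
    _ = c * (1 - α⁻¹ ^ (q + 1 - 1)) := by
      rw [Nat.add_sub_cancel, inv_pow, inv_pow]
      field_simp
      ring

/-- If `α ^ p - α = ϖ⁻¹`, multiplying by `ϖ α⁻¹ ^ p` shows that `α⁻¹` is a root. -/
noncomputable def reciprocalArtinSchreier {R : Type*} [CommRing R] (p : ℕ) (ϖ : R) : R[X] :=
  X ^ p + C ϖ * (X ^ (p - 1) - 1)

section ReciprocalArtinSchreier

variable {R : Type*} [CommRing R] {p : ℕ} (ϖ : R)

theorem degree_C_mul_X_pow_pred_sub_one_lt (hp : 0 < p) :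
    (C ϖ * (X ^ (p - 1) - 1) : R[X]).degree < p := by
  refine lt_of_le_of_lt (b := ((p - 1 : ℕ) : WithBot ℕ)) ?_
    (by exact_mod_cast Nat.sub_lt hp one_pos)
  compute_degree
  exact le_rfl

theorem reciprocalArtinSchreier_monic (hp : 0 < p) : (reciprocalArtinSchreier p ϖ).Monic :=
  monic_X_pow_add (degree_C_mul_X_pow_pred_sub_one_lt ϖ hp)

theorem natDegree_reciprocalArtinSchreier [Nontrivial R] (hp : 0 < p) :
    (reciprocalArtinSchreier p ϖ).natDegree = p := by
  rw [reciprocalArtinSchreier, natDegree_add_eq_left_of_degree_lt, natDegree_X_pow]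
  rw [degree_X_pow]
  exact degree_C_mul_X_pow_pred_sub_one_lt ϖ hp

theorem aeval_reciprocalArtinSchreier {A : Type*} [CommRing A] [Algebra R A] (x : A) :
    aeval x (reciprocalArtinSchreier p ϖ) = x ^ p + algebraMap R A ϖ * (x ^ (p - 1) - 1) := by
  simp [reciprocalArtinSchreier]

theorem derivative_reciprocalArtinSchreier [CharP R p] (hp : 0 < p) :
    derivative (reciprocalArtinSchreier p ϖ) = -(C ϖ * X ^ (p - 2)) := by
  have hcast : ((p - 1 : ℕ) : R) = -1 := by
    rw [Nat.cast_sub hp, CharP.cast_eq_zero, Nat.cast_one, zero_sub]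
  simp only [reciprocalArtinSchreier, derivative_add, derivative_mul, derivative_sub,
    derivative_X_pow, derivative_C, derivative_one, CharP.cast_eq_zero, map_zero, hcast, map_neg,
    map_one]
  rw [Nat.sub_sub]
  ring

end ReciprocalArtinSchreier

theorem associated_pow_of_aeval_reciprocalArtinSchreier_eq_zero {R S : Type*} [CommRing R]
    [CommRing S] [IsLocalRing S] [Algebra R S] {p : ℕ} (hp : 2 ≤ p) {ϖ : R} {y : S}
    (hy : y ∈ maximalIdeal S) (h : aeval y (reciprocalArtinSchreier p ϖ) = 0) :
    Associated (algebraMap R S ϖ) (y ^ p) := by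
  obtain ⟨w, hw⟩ := isUnit_one_sub_self_of_mem_nonunits _
    ((maximalIdeal S).pow_mem_of_mem hy (p - 1) (by omega))
  rw [aeval_reciprocalArtinSchreier] at h
  exact ⟨w, by rw [hw]; linear_combination -h⟩

theorem isSeparable_of_pow_sub_self_eq_algebraMap {K L : Type*} [Field K] [Field L] [Algebra K L]
    (p : ℕ) [CharP K p] {α : L} {β : K} (h : α ^ p - α = algebraMap K L β) :
    IsSeparable K α := by
  have hroot : aeval α (X ^ p - X - C β) = 0 := by simp [h]
  have hsep : (X ^ p - X - C β : K[X]).Separable := by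
    rw [separable_def]
    have : derivative (X ^ p - X - C β : K[X]) = -1 := by simp [derivative_X_pow]
    rw [this]
    exact isCoprime_one_right.neg_right
  exact hsep.of_dvd (minpoly.dvd K α hroot)

theorem IntermediateField.adjoin_simple_inv (K : Type*) {L : Type*} [Field K] [Field L]
    [Algebra K L] (α : L) : K⟮α⁻¹⟯ = K⟮α⟯ := by
  refine le_antisymm ?_ ?_ <;> rw [adjoin_simple_le_iff]
  · exact inv_mem (mem_adjoin_simple_self K α)
  · simpa using inv_mem (mem_adjoin_simple_self K α⁻¹)

theorem Algebra.IsSeparable.of_adjoin_simple_eq_top {K L : Type*} [Field K] [Field L]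
    [Algebra K L] {α : L} (hα : IsSeparable K α) (h : K⟮α⟯ = ⊤) : Algebra.IsSeparable K L := by
  rw [← separableClosure.eq_top_iff, _root_.eq_top_iff, ← h, adjoin_simple_le_iff]
  exact mem_separableClosure_iff.mpr hα

theorem Ideal.ramificationIdx'_eq_of_map_eq_pow {R S : Type*} [CommRing R] [CommRing S]
    [IsDedekindDomain S] [Algebra R S] {p : Ideal R} {P : Ideal S} (hP0 : P ≠ ⊥) (hP1 : P ≠ ⊤)
    {e : ℕ} (h : p.map (algebraMap R S) = P ^ e) : ramificationIdx' p P = e :=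
  ramificationIdx'_spec h.le (h ▸ (P.pow_right_strictAnti hP0 hP1 e.lt_succ_self).not_ge)

theorem irreducible_of_map_maximalIdeal_eq_span_pow {R S : Type*} [CommRing R] [IsLocalRing R]
    [CommRing S] [IsDomain S] [IsDiscreteValuationRing S] [Algebra R S] {y : S} {e : ℕ} (he : 0 < e)
    (hmap : (maximalIdeal R).map (algebraMap R S) = Ideal.span {y ^ e})
    (hram : Ideal.ramificationIdx' (maximalIdeal R) (maximalIdeal S) = e) : Irreducible y := by
  have hy : y ≠ 0 := by
    rintro rfl
    rw [zero_pow he.ne', Ideal.span_singleton_eq_bot.mpr rfl] at hmap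
    exact he.ne' <| hram ▸
      Ideal.ramificationIdx'_eq_zero fun n ↦ ⟨n + 1, hmap ▸ bot_le, n.lt_succ_self⟩
  obtain ⟨t, ht⟩ := IsDiscreteValuationRing.exists_irreducible S
  obtain ⟨n, hn⟩ := IsDiscreteValuationRing.associated_pow_irreducible hy ht
  have hmS := (IsDiscreteValuationRing.irreducible_iff_uniformizer t).mp ht
  have hmap' : (maximalIdeal R).map (algebraMap R S) = maximalIdeal S ^ (n * e) := by
    rw [hmap, hmS, Ideal.span_singleton_pow, pow_mul]
    exact Ideal.span_singleton_eq_span_singleton.mpr hn.pow_pow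
  rw [Ideal.ramificationIdx'_eq_of_map_eq_pow (IsDiscreteValuationRing.not_a_field S)
    (maximalIdeal.isMaximal S).ne_top hmap'] at hram
  obtain rfl : n = 1 := by
    rwa [Nat.mul_eq_right he.ne'] at hram
  exact (pow_one t ▸ hn).symm.irreducible ht

section AdjoinUniformizer

variable {R S : Type*} [CommRing R] [CommRing S] [Algebra R S] {y : S}

theorem exists_sub_mem_span_pow_of_forall_sub_mem_span
    (hres : ∀ s : S, ∃ r : R, s - algebraMap R S r ∈ Ideal.span {y}) (j : ℕ) (s : S) :
    ∃ m ∈ Algebra.adjoin R {y}, s - m ∈ Ideal.span {y ^ j} := by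
  induction j generalizing s with
  | zero => exact ⟨0, zero_mem _, by simp⟩
  | succ j ih =>
    obtain ⟨m, hm, hsm⟩ := ih s
    obtain ⟨c, hc⟩ := Ideal.mem_span_singleton.mp hsm
    obtain ⟨r, hr⟩ := hres c
    obtain ⟨d, hd⟩ := Ideal.mem_span_singleton.mp hr
    refine ⟨m + algebraMap R S r * y ^ j, add_mem hm (mul_mem (Subalgebra.algebraMap_mem _ r)
      (pow_mem (Algebra.self_mem_adjoin_singleton R y) j)), Ideal.mem_span_singleton.mpr ⟨d, ?_⟩⟩
    linear_combination hc + y ^ j * hd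

theorem adjoin_singleton_eq_top_of_span_pow_le_map [IsLocalRing R] [Module.Finite R S]
    (hres : ∀ s : S, ∃ r : R, s - algebraMap R S r ∈ Ideal.span {y}) {e : ℕ}
    (hpow : Ideal.span {y ^ e} ≤ (maximalIdeal R).map (algebraMap R S)) :
    Algebra.adjoin R {y} = ⊤ := by
  rw [← Algebra.toSubmodule_eq_top, eq_top_iff]
  refine Submodule.le_of_le_smul_of_le_jacobson_bot Module.Finite.fg_top
    (maximalIdeal_le_jacobson _) fun s _ ↦ ?_
  obtain ⟨m, hm, hsm⟩ := exists_sub_mem_span_pow_of_forall_sub_mem_span hres e s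
  rw [Ideal.smul_top_eq_map]
  have hsm' : s - m ∈ ((maximalIdeal R).map (algebraMap R S)).restrictScalars R := hpow hsm
  simpa using Submodule.add_mem_sup (Subalgebra.mem_toSubmodule _ |>.mpr hm) hsm'

end AdjoinUniformizer

section IntegralClosure

variable {R K L S : Type*} [CommRing R] [IsIntegrallyClosed R] [Field K] [Field L]
  [CommRing S] [Algebra R K] [IsFractionRing R K] [Algebra K L] [Algebra R L] [IsScalarTower R K L]

theorem not_isIntegral_of_pow_sub_self_eq {p : ℕ} {α : L} {β : K} {ϖ : R} (hϖ : ¬IsUnit ϖ)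
    (hαβ : α ^ p - α = algebraMap K L β) (hβ : β * algebraMap R K ϖ = 1) : ¬IsIntegral R α := by
  intro hα
  have hβL : IsIntegral R (algebraMap K L β) := hαβ ▸ (hα.pow p).sub hα
  exact not_isIntegral_of_mul_eq_one hϖ hβ <|
    (isIntegral_algHom_iff (IsScalarTower.toAlgHom R K L) (algebraMap K L).injective).mp hβL

variable [Algebra R S] [Algebra S L] [IsScalarTower R S L] [IsIntegralClosure S R L]

theorem exists_mem_maximalIdeal_aeval_reciprocalArtinSchreier_eq_zero [IsLocalRing S] {p : ℕ}
    (hp : 0 < p) {α : L} {β : K} {ϖ : R} (hϖ : ¬IsUnit ϖ) (hαβ : α ^ p - α = algebraMap K L β)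
    (hβ : β * algebraMap R K ϖ = 1) :
    ∃ y : S, algebraMap S L y = α⁻¹ ∧ y ∈ maximalIdeal S ∧
      aeval y (reciprocalArtinSchreier p ϖ) = 0 := by
  have hαϖ : (α ^ p - α) * algebraMap R L ϖ = 1 := by
    rw [hαβ, IsScalarTower.algebraMap_apply R K L, ← map_mul, hβ, map_one]
  have hroot : aeval α⁻¹ (reciprocalArtinSchreier p ϖ) = 0 := by
    rw [aeval_reciprocalArtinSchreier, inv_pow_eq_mul_one_sub_inv_pow hp hαϖ]
    ring
  have hint : IsIntegral R α⁻¹ := ⟨_, reciprocalArtinSchreier_monic ϖ hp, by rwa [← aeval_def]⟩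
  obtain ⟨y, hy⟩ := (IsIntegralClosure.isIntegral_iff (A := S)).mp hint
  refine ⟨y, hy, (mem_maximalIdeal y).mpr fun hu ↦ ?_, ?_⟩
  · refine not_isIntegral_of_pow_sub_self_eq hϖ hαβ hβ ?_
    have : algebraMap S L ↑hu.unit⁻¹ = α := by
      rw [← inv_inv α, ← hy]
      exact eq_inv_of_mul_eq_one_left (by rw [← map_mul, hu.val_inv_mul, map_one])
    exact this ▸ (IsIntegralClosure.isIntegral R L (↑hu.unit⁻¹ : S)).algebraMap
  · apply IsIntegralClosure.algebraMap_injective S R L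
    rw [← aeval_algebraMap_apply, hy, hroot, map_zero]

theorem minpoly_eq_of_natDegree_le_finrank [IsDomain R] [IsDomain S] [Module.IsTorsionFree R S]
    [FiniteDimensional K L] {x : S} {f : R[X]} (hf : f.Monic) (hx : aeval x f = 0)
    (hgen : K⟮algebraMap S L x⟯ = ⊤) (hdeg : f.natDegree ≤ Module.finrank K L) :
    minpoly R x = f := by
  have hint : IsIntegral R x := IsIntegralClosure.isIntegral R L x
  refine (eq_of_monic_of_dvd_of_natDegree_le (minpoly.monic hint) hf
    (minpoly.isIntegrallyClosed_dvd hint hx) ?_).symm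
  rw [← (minpoly.monic hint).natDegree_map (algebraMap R K),
    ← minpoly.isIntegrallyClosed_eq_field_fractions K L hint,
    ← adjoin.finrank (.of_finite K _), hgen, finrank_top']
  exact hdeg

end IntegralClosure

theorem differentIdeal_eq_span_aeval_derivative_minpoly (R K L : Type*) {S : Type*}
    [CommRing R] [IsDomain R] [IsIntegrallyClosed R] [Field K] [Field L] [CommRing S]
    [IsDedekindDomain S] [Algebra R K] [IsFractionRing R K] [Algebra K L] [FiniteDimensional K L]
    [Algebra.IsSeparable K L] [Algebra R S] [Module.IsTorsionFree R S] [Algebra S L] [Algebra R L]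
    [IsScalarTower R S L] [IsScalarTower R K L] [IsIntegralClosure S R L] {x : S}
    (hR : Algebra.adjoin R {x} = ⊤) (hK : Algebra.adjoin K {algebraMap S L x} = ⊤) :
    differentIdeal R S = Ideal.span {aeval x (derivative (minpoly R x))} := by
  rw [← conductor_mul_differentIdeal R K L x hK, conductor_eq_top_of_adjoin_eq_top hR,
    Ideal.top_mul]

theorem killing_wild_ramification_stmt4_general
    (p : ℕ) [Fact p.Prime]
    (k : Type*) [Field k] [CharP k p]
    (R K L S : Type*) [CommRing R] [IsDomain R] [IsDiscreteValuationRing R]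
    [Field K] [Field L] [Algebra R K] [IsFractionRing R K]
    [Algebra K L] [FiniteDimensional K L]
    [CommRing S] [IsDomain S] [IsDiscreteValuationRing S]
    [Algebra R S] [Module.Finite R S] [NoZeroSMulDivisors R S]
    [Algebra S L] [Algebra R L]
    [IsScalarTower R S L] [IsScalarTower R K L]
    [IsIntegralClosure S R L]
    -- `R` and `S` are `k`-algebras (the extension is "over `k`")
    [Algebra k R]
    -- `S/R` is totally ramified:
    (htot_e : Ideal.ramificationIdx' (maximalIdeal R) (maximalIdeal S) =
      Module.finrank K L)
    (htot_f : ∀ s : S, ∃ r : R, s - algebraMap R S r ∈ maximalIdeal S)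
    -- the extension has degree `p` and is generated by an Artin–Schreier element
    -- of conductor `1`:
    (hdeg : Module.finrank K L = p)
    (α : L) (β : K)
    (hαβ : algebraMap K L β = α ^ p - α)
    (hβ : valIsNegOne R K β)
    (hgen : IntermediateField.adjoin K {α} = ⊤) :
    differentIdeal R S = maximalIdeal S ^ (2 * p - 2) := by
  have hp : p.Prime := Fact.out
  have : CharP R p := charP_of_injective_algebraMap (algebraMap k R).injective p
  have : CharP K p := charP_of_injective_algebraMap (IsFractionRing.injective R K) p
  obtain ⟨ϖ, hϖ, hβϖ⟩ := hβ.exists_irreducible_mul_eq_one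
  obtain ⟨y, hyα, hym, hy⟩ := exists_mem_maximalIdeal_aeval_reciprocalArtinSchreier_eq_zero
    (S := S) hp.pos hϖ.not_isUnit hαβ.symm hβϖ
  have hϖy := associated_pow_of_aeval_reciprocalArtinSchreier_eq_zero hp.two_le hym hy
  have hmap : (maximalIdeal R).map (algebraMap R S) = Ideal.span {y ^ p} := by
    rw [(IsDiscreteValuationRing.irreducible_iff_uniformizer ϖ).mp hϖ, Ideal.map_span,
      Set.image_singleton, Ideal.span_singleton_eq_span_singleton.mpr hϖy]
  have hmS := (IsDiscreteValuationRing.irreducible_iff_uniformizer y).mp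
    (irreducible_of_map_maximalIdeal_eq_span_pow hp.pos hmap (htot_e.trans hdeg))
  have hR : Algebra.adjoin R {y} = ⊤ :=
    adjoin_singleton_eq_top_of_span_pow_le_map (hmS ▸ htot_f) hmap.ge
  have hK : K⟮algebraMap S L y⟯ = ⊤ := by rw [hyα, adjoin_simple_inv, hgen]
  have : Algebra.IsSeparable K L :=
    .of_adjoin_simple_eq_top (isSeparable_of_pow_sub_self_eq_algebraMap p hαβ.symm) hgen
  have hmin : minpoly R y = reciprocalArtinSchreier p ϖ :=
    minpoly_eq_of_natDegree_le_finrank (reciprocalArtinSchreier_monic ϖ hp.pos) hy hK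
      (by rw [natDegree_reciprocalArtinSchreier ϖ hp.pos, hdeg])
  rw [differentIdeal_eq_span_aeval_derivative_minpoly R K L hR
    ((adjoin_simple_eq_top_iff_of_isAlgebraic (.of_finite K _)).mp hK), hmin,
    derivative_reciprocalArtinSchreier ϖ hp.pos, hmS, Ideal.span_singleton_pow,
    Ideal.span_singleton_eq_span_singleton, map_neg, map_mul, aeval_C, aeval_X_pow,
    Associated.neg_left_iff,
    show 2 * p - 2 = p + (p - 2) by have := hp.two_le; omega, pow_add]
  exact hϖy.mul_right _

theorem killing_wild_ramification_stmt4
    (p : ℕ) [Fact p.Prime]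
    (k : Type*) [Field k] [PerfectField k] [CharP k p]
    (R K L S : Type*) [CommRing R] [IsDomain R] [IsDiscreteValuationRing R]
    [IsAdicComplete (maximalIdeal R) R]
    [Field K] [Field L] [Algebra R K] [IsFractionRing R K]
    [Algebra K L] [FiniteDimensional K L]
    [CommRing S] [IsDomain S] [IsDiscreteValuationRing S]
    [IsAdicComplete (maximalIdeal S) S]
    [Algebra R S] [Module.Finite R S] [NoZeroSMulDivisors R S]
    [Algebra S L] [Algebra R L]
    [IsScalarTower R S L] [IsScalarTower R K L]
    [IsIntegralClosure S R L] [IsFractionRing S L]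
    -- `R` and `S` are `k`-algebras (the extension is "over `k`")
    [Algebra k R] [Algebra k S] [IsScalarTower k R S]
    -- `S/R` is totally ramified:
    (htot_e : Ideal.ramificationIdx' (maximalIdeal R) (maximalIdeal S) =
      Module.finrank K L)
    (htot_f : ∀ s : S, ∃ r : R, s - algebraMap R S r ∈ maximalIdeal S)
    -- the extension has degree `p` and is generated by an Artin–Schreier element
    -- of conductor `1`:
    (hdeg : Module.finrank K L = p)
    (α : L) (β : K)
    (hαβ : algebraMap K L β = α ^ p - α)
    (hβ : valIsNegOne R K β)
    (hgen : IntermediateField.adjoin K {α} = ⊤) :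
    differentIdeal R S = maximalIdeal S ^ (2 * p - 2) :=
  killing_wild_ramification_stmt4_general p k R K L S htot_e htot_f hdeg α β hαβ hβ hgen
end

section
/- With notation as before (R a DVR with fraction field K, L, M finite separable extensions of K, Ω = LM, A a DVR of Ω dominating R with S = A ∩ L, T = A ∩ M, and A/m_A = S/m_S): if QF(Ŝ) ⊆ QF(T̂), then the extension A/T is unramified. -/
/-!
Both `L` and `M` map into `QF(T̂)` inside `QF(Â)`: `M` because `T ⊆ T̂`, `L` because
`S ⊆ Ŝ` and `QF(Ŝ) ⊆ QF(T̂)`; since every element of `Ω` or its inverse lies in `A`, it is enough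
to check this on `A ∩ L = S` and `A ∩ M = T`. As `Ω = LM`, every `a ∈ A` is a quotient of two
elements of `T̂`. Completeness makes `π_T` a uniformizer of `T̂`, so `a π_T ^ m = π_T ^ l w` in `Â`
with `w ∈ T̂ˣ`. For `a = π_A` and `π_T = u π_A ^ e` this reads `1 + e m = e l`, so `e = 1`; for a
unit `a` it gives `a = w`, and `w` is congruent to an element of `T`.
-/

set_option synthInstance.maxHeartbeats 1000000
set_option maxHeartbeats 1000000

open IsLocalRing

/-- `Rhat` (with a given `R`-algebra structure) is the maximal-adic completion of
the local ring `R`: it is adically complete, `R` is dense in it, and the map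
`R → Rhat` exactly matches the maximal-adic filtrations. -/
def IsCompletionHom (R Rhat : Type*) [CommRing R] [IsLocalRing R]
    [CommRing Rhat] [IsLocalRing Rhat] [Algebra R Rhat] : Prop :=
  IsAdicComplete (maximalIdeal Rhat) Rhat ∧
  (∀ (y : Rhat) (n : ℕ), ∃ x : R, y - algebraMap R Rhat x ∈ maximalIdeal Rhat ^ n) ∧
  (∀ (x : R) (n : ℕ), algebraMap R Rhat x ∈ maximalIdeal Rhat ^ n ↔ x ∈ maximalIdeal R ^ n)

namespace IsCompletionHom

section LocalRing

variable {R Rhat : Type*} [CommRing R] [IsLocalRing R] [CommRing Rhat] [IsLocalRing Rhat]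
  [Algebra R Rhat]

theorem algebraMap_mem_maximalIdeal_iff (h : IsCompletionHom R Rhat) (x : R) :
    algebraMap R Rhat x ∈ maximalIdeal Rhat ↔ x ∈ maximalIdeal R := by
  simpa using h.2.2 x 1

theorem exists_sub_algebraMap_mem_maximalIdeal (h : IsCompletionHom R Rhat) (y : Rhat) :
    ∃ x : R, y - algebraMap R Rhat x ∈ maximalIdeal Rhat := by
  simpa using h.2.1 y 1

theorem eq_zero_of_forall_mem_pow (h : IsCompletionHom R Rhat) {y : Rhat}
    (hy : ∀ n, y ∈ maximalIdeal Rhat ^ n) : y = 0 :=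
  h.1.haus y fun n => by simpa [SModEq.sub_mem] using hy n

theorem algebraMap_injective [IsNoetherianRing R] (h : IsCompletionHom R Rhat) :
    Function.Injective (algebraMap R Rhat) := by
  refine (injective_iff_map_eq_zero _).2 fun x hx => ?_
  have hx : x ∈ ⨅ n : ℕ, maximalIdeal R ^ n :=
    Ideal.mem_iInf.2 fun n => (h.2.2 x n).1 (hx ▸ zero_mem _)
  rwa [Ideal.iInf_pow_eq_bot_of_isLocalRing _ (maximalIdeal.isMaximal R).ne_top] at hx

end LocalRing

section DiscreteValuationRing

variable {T C : Type*} [CommRing T] [IsDomain T] [IsDiscreteValuationRing T]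
  [CommRing C] [IsLocalRing C] [Algebra T C]

theorem algebraMap_mem_maximalIdeal_of_irreducible (h : IsCompletionHom T C) {π : T}
    (hπ : Irreducible π) : algebraMap T C π ∈ maximalIdeal C :=
  (h.algebraMap_mem_maximalIdeal_iff π).2 ((mem_maximalIdeal π).2 hπ.not_isUnit)

/-- The successive approximations `y ≡ π^k (w₀ + π w₁ + ⋯)` by elements of `T` converge, as `C`
is complete and the filtrations of `T` and `C` match. -/
theorem maximalIdeal_pow_le_span (h : IsCompletionHom T C) {π : T} (hπ : Irreducible π)
    (k : ℕ) : maximalIdeal C ^ k ≤ Ideal.span {algebraMap T C π ^ k} := by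
  let N : Submodule C C := maximalIdeal C ^ k
  let f : C →ₗ[C] N := LinearMap.toSpanSingleton C N
    ⟨_, Ideal.pow_mem_pow (h.algebraMap_mem_maximalIdeal_of_irreducible hπ) k⟩
  have : IsPrecomplete (maximalIdeal C) C := h.1.toIsPrecomplete
  have : IsHausdorff (maximalIdeal C) N := by
    refine ⟨fun x hx => Subtype.ext (h.eq_zero_of_forall_mem_pow fun n => ?_)⟩
    have hxn := (Submodule.mem_smul_top_iff _ N x).1 (by simpa [SModEq.sub_mem] using hx n)
    rw [Ideal.smul_eq_mul] at hxn
    exact Ideal.mul_le_left (I := maximalIdeal C ^ n) (J := maximalIdeal C ^ k) hxn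
  have hf : Function.Surjective f := by
    apply surjective_of_mkQ_comp_surjective (I := maximalIdeal C)
    intro y
    obtain ⟨z, rfl⟩ := Submodule.mkQ_surjective _ y
    obtain ⟨t, ht⟩ := h.2.1 z (k + 1)
    have ht_pow : t ∈ maximalIdeal T ^ k := by
      refine (h.2.2 t k).1 ?_
      simpa using sub_mem z.2 (Ideal.pow_le_pow_right k.le_succ ht)
    rw [(IsDiscreteValuationRing.irreducible_iff_uniformizer π).1 hπ, Ideal.span_singleton_pow,
      Ideal.mem_span_singleton'] at ht_pow
    obtain ⟨w, rfl⟩ := ht_pow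
    refine ⟨algebraMap T C w, (Submodule.Quotient.eq _).2 ?_⟩
    rw [Submodule.mem_smul_top_iff, Ideal.smul_eq_mul, ← pow_succ']
    simpa [f, Algebra.smul_def] using neg_mem ht
  intro y hy
  obtain ⟨c, hc⟩ := hf ⟨y, hy⟩
  have hc := congrArg Subtype.val hc
  simp only [f, LinearMap.toSpanSingleton_apply, SetLike.mk_smul_mk, smul_eq_mul] at hc
  exact Ideal.mem_span_singleton'.2 ⟨c, hc⟩

theorem maximalIdeal_eq_span (h : IsCompletionHom T C) {π : T} (hπ : Irreducible π) :
    maximalIdeal C = Ideal.span {algebraMap T C π} := by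
  refine le_antisymm (by simpa using h.maximalIdeal_pow_le_span hπ 1) ?_
  rw [Ideal.span_le, Set.singleton_subset_iff]
  exact h.algebraMap_mem_maximalIdeal_of_irreducible hπ

theorem isLocalHom_of_map_mem_maximalIdeal (h : IsCompletionHom T C) {π : T}
    (hπ : Irreducible π) {D : Type*} [CommRing D] [IsLocalRing D] (f : C →+* D)
    (hf : f (algebraMap T C π) ∈ maximalIdeal D) : IsLocalHom f := by
  refine ((local_hom_TFAE f).out 0 2).2 ?_
  rw [h.maximalIdeal_eq_span hπ, Ideal.map_span, Set.image_singleton, Ideal.span_le,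
    Set.singleton_subset_iff]
  exact hf

theorem exists_eq_pow_mul_of_isUnit (h : IsCompletionHom T C) {π : T} (hπ : Irreducible π)
    {y : C} (hy : y ≠ 0) : ∃ (n : ℕ) (u : C), IsUnit u ∧ y = algebraMap T C π ^ n * u := by
  classical
  obtain ⟨n, hyn, hyn_succ⟩ : ∃ n, y ∈ maximalIdeal C ^ n ∧ y ∉ maximalIdeal C ^ (n + 1) := by
    have hex : ∃ n, y ∉ maximalIdeal C ^ (n + 1) := by
      by_contra! hall
      exact hy (h.eq_zero_of_forall_mem_pow fun | 0 => by simp | n + 1 => hall n)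
    refine ⟨Nat.find hex, ?_, Nat.find_spec hex⟩
    rcases hn : Nat.find hex with _ | n
    · simp
    · exact not_not.1 (Nat.find_min hex (hn ▸ n.lt_succ_self))
  obtain ⟨u, rfl⟩ := Ideal.mem_span_singleton'.1 (h.maximalIdeal_pow_le_span hπ n hyn)
  refine ⟨n, u, ?_, mul_comm _ _⟩
  by_contra hu
  refine hyn_succ ?_
  rw [pow_succ']
  exact Ideal.mul_mem_mul ((mem_maximalIdeal u).2 hu)
    (Ideal.pow_mem_pow (h.algebraMap_mem_maximalIdeal_of_irreducible hπ) n)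

end DiscreteValuationRing

end IsCompletionHom

theorem IsLocalRing.eq_of_pow_mul_eq_pow_mul {C : Type*} [CommRing C] [IsLocalRing C]
    [IsDomain C] {p : C} (hp0 : p ≠ 0) (hp : p ∈ maximalIdeal C) {u v : C} (hu : IsUnit u)
    (hv : IsUnit v) {i j : ℕ} (h : p ^ i * u = p ^ j * v) : i = j := by
  wlog hij : i ≤ j generalizing i j u v
  · exact (this hv hu h.symm (le_of_not_ge hij)).symm
  obtain ⟨d, rfl⟩ := Nat.exists_eq_add_of_le hij
  rw [pow_add, mul_assoc] at h
  have hud : u = p ^ d * v := mul_left_cancel₀ (pow_ne_zero i hp0) h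
  rcases d with _ | d
  · rfl
  · refine absurd hu ((mem_maximalIdeal u).1 ?_)
    rw [hud]
    exact Ideal.mul_mem_right _ _ (Ideal.pow_mem_of_mem _ hp _ d.succ_pos)

theorem map_maximalIdeal_eq_of_irreducible_algebraMap {T A : Type*} [CommRing T]
    [IsDomain T] [IsDiscreteValuationRing T] [CommRing A] [IsDomain A]
    [IsDiscreteValuationRing A] [Algebra T A] {π : T} (hπ : Irreducible π)
    (hπA : Irreducible (algebraMap T A π)) :
    Ideal.map (algebraMap T A) (maximalIdeal T) = maximalIdeal A := by
  rw [(IsDiscreteValuationRing.irreducible_iff_uniformizer π).1 hπ,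
    (IsDiscreteValuationRing.irreducible_iff_uniformizer _).1 hπA, Ideal.map_span,
    Set.image_singleton]

theorem Subfield.exists_div_eq_of_mem_closure_range {R E : Type*} [CommRing R] [Field E]
    (f : R →+* E) {z : E} (hz : z ∈ Subfield.closure (Set.range f)) :
    ∃ x y : R, f x / f y = z := by
  rw [← RingHom.coe_range, Subfield.mem_closure_iff, Subring.closure_eq] at hz
  obtain ⟨_, ⟨x, rfl⟩, _, ⟨y, rfl⟩, hxy⟩ := hz
  exact ⟨x, y, hxy⟩

theorem Subfield.le_comap_of_valuationRing {A Ω E : Type*} [CommRing A] [IsDomain A]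
    [ValuationRing A] [Field Ω] [Algebra A Ω] [IsFractionRing A Ω] [Field E] (g : Ω →+* E)
    {L : Subfield Ω} {F : Subfield E}
    (hL : ∀ a : A, algebraMap A Ω a ∈ L → g (algebraMap A Ω a) ∈ F) : L ≤ F.comap g := by
  intro x hx
  rcases ValuationRing.isInteger_or_isInteger A x with ⟨a, rfl⟩ | ⟨a, ha⟩
  · exact hL a hx
  · have := hL a (ha ▸ L.inv_mem hx)
    rw [ha, map_inv₀] at this
    simpa using F.inv_mem this

theorem IntermediateField.eq_top_of_le_of_sup_eq_top {K Ω : Type*} [Field K] [Field Ω]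
    [Algebra K Ω] {L M : IntermediateField K Ω} (hLM : L ⊔ M = ⊤) {F : Subfield Ω}
    (hL : L.toSubfield ≤ F) (hM : M.toSubfield ≤ F) : F = ⊤ := by
  let F' := F.toIntermediateField fun x => hM (M.algebraMap_mem x)
  have : L ⊔ M ≤ F' := sup_le (fun x hx => hL hx) (fun x hx => hM hx)
  exact eq_top_iff.2 fun x _ => (hLM ▸ this) (IntermediateField.mem_top (x := x))

/-- The fraction field `QF(Ĉ)` of the image of `Ĉ` inside `QF(Â)`. -/
noncomputable abbrev imageFractionField (Chat Ahat : Type*) [CommRing Chat] [CommRing Ahat]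
    [IsDomain Ahat] [Algebra Chat Ahat] : Subfield (FractionRing Ahat) :=
  Subfield.closure (Set.range fun c : Chat =>
    algebraMap Ahat (FractionRing Ahat) (algebraMap Chat Ahat c))

section Unramified

variable {T That Ahat : Type*} [CommRing T] [IsDomain T] [IsDiscreteValuationRing T]
  [CommRing That] [IsLocalRing That] [Algebra T That]
  [CommRing Ahat] [IsLocalRing Ahat] [IsDomain Ahat] [Algebra That Ahat]

theorem IsCompletionHom.exists_mul_pow_eq_pow_mul_of_mem_imageFractionField
    (hThat : IsCompletionHom T That) {π : T} (hπ : Irreducible π) {z : Ahat} (hz : z ≠ 0)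
    (hzF : algebraMap Ahat (FractionRing Ahat) z ∈ imageFractionField That Ahat) :
    ∃ (m l : ℕ) (w : That), IsUnit w ∧
      z * algebraMap That Ahat (algebraMap T That π) ^ m =
        algebraMap That Ahat (algebraMap T That π) ^ l * algebraMap That Ahat w := by
  set φ := algebraMap That Ahat
  have hι := IsFractionRing.injective Ahat (FractionRing Ahat)
  obtain ⟨x, y, hxy⟩ :=
    Subfield.exists_div_eq_of_mem_closure_range ((algebraMap Ahat _).comp φ) hzF
  simp only [RingHom.comp_apply] at hxy
  have hy : φ y ≠ 0 := fun hy => hz (hι (by rw [← hxy, hy, map_zero, div_zero]))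
  have hzy : z * φ y = φ x := hι (by rw [map_mul, ← hxy, div_mul_cancel₀ _ (by simpa using hy)])
  have hx : φ x ≠ 0 := hzy ▸ mul_ne_zero hz hy
  obtain ⟨l, x₀, hx₀, rfl⟩ :=
    hThat.exists_eq_pow_mul_of_isUnit hπ (y := x) fun h => hx (by simp [h])
  obtain ⟨m, y₀, hy₀, rfl⟩ :=
    hThat.exists_eq_pow_mul_of_isUnit hπ (y := y) fun h => hy (by simp [h])
  refine ⟨m, l, x₀ * ↑hy₀.unit⁻¹, hx₀.mul hy₀.unit⁻¹.isUnit, ?_⟩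
  have hy₀_inv : φ y₀ * φ ↑hy₀.unit⁻¹ = 1 := by
    rw [← map_mul, IsUnit.mul_val_inv, map_one]
  simp only [map_mul, map_pow] at hzy ⊢
  linear_combination φ ↑hy₀.unit⁻¹ * hzy - z * φ (algebraMap T That π) ^ m * hy₀_inv

variable {A : Type*} [CommRing A] [IsDomain A] [IsDiscreteValuationRing A] [Algebra T A]
  [Algebra A Ahat]

theorem irreducible_algebraMap_of_forall_mem_imageFractionField
    (hThat : IsCompletionHom T That) (hAhat : IsCompletionHom A Ahat)
    (hTA : ∀ t : T, algebraMap That Ahat (algebraMap T That t) =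
      algebraMap A Ahat (algebraMap T A t))
    (hT : Function.Injective (algebraMap T A))
    (hAF : ∀ a : A, algebraMap Ahat (FractionRing Ahat) (algebraMap A Ahat a) ∈
      imageFractionField That Ahat)
    {π : T} (hπ : Irreducible π) : Irreducible (algebraMap T A π) := by
  obtain ⟨ϖ, hϖ⟩ := IsDiscreteValuationRing.exists_irreducible A
  obtain ⟨e, u, hu⟩ := IsDiscreteValuationRing.eq_unit_mul_pow_irreducible
    ((map_ne_zero_iff _ hT).2 hπ.ne_zero) hϖ
  set p := algebraMap A Ahat ϖ
  have hp0 : p ≠ 0 := (map_ne_zero_iff _ hAhat.algebraMap_injective).2 hϖ.ne_zero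
  have hp : p ∈ maximalIdeal Ahat := hAhat.algebraMap_mem_maximalIdeal_of_irreducible hϖ
  obtain ⟨m, l, w, hw, h⟩ :=
    hThat.exists_mul_pow_eq_pow_mul_of_mem_imageFractionField hπ hp0 (hAF ϖ)
  have hu' : IsUnit (algebraMap A Ahat u) := u.isUnit.map _
  rw [hTA, hu, map_mul, map_pow] at h
  have hem : 1 + e * m = e * l := by
    refine IsLocalRing.eq_of_pow_mul_eq_pow_mul hp0 hp (hu'.pow m)
      ((hu'.pow l).mul (hw.map (algebraMap That Ahat))) ?_
    rw [pow_add, pow_mul, pow_mul]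
    linear_combination h
  have he : e = 1 := Nat.dvd_one.1 ⟨l - m, by rw [Nat.mul_sub]; omega⟩
  rw [hu, he, pow_one]
  exact Associated.irreducible ⟨u, mul_comm _ _⟩ hϖ

theorem exists_sub_algebraMap_mem_maximalIdeal_of_forall_mem_imageFractionField
    (hThat : IsCompletionHom T That) (hAhat : IsCompletionHom A Ahat)
    (hTA : ∀ t : T, algebraMap That Ahat (algebraMap T That t) =
      algebraMap A Ahat (algebraMap T A t))
    (hAF : ∀ a : A, algebraMap Ahat (FractionRing Ahat) (algebraMap A Ahat a) ∈
      imageFractionField That Ahat)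
    {π : T} (hπ : Irreducible π) (hπA : Irreducible (algebraMap T A π)) (a : A) :
    ∃ t : T, a - algebraMap T A t ∈ maximalIdeal A := by
  by_cases ha : a ∈ maximalIdeal A
  · exact ⟨0, by simpa using ha⟩
  have ha' : IsUnit (algebraMap A Ahat a) := (notMem_maximalIdeal.1 ha).map _
  set p := algebraMap That Ahat (algebraMap T That π)
  have hpA : p = algebraMap A Ahat (algebraMap T A π) := hTA π
  have hp0 : p ≠ 0 := hpA ▸ (map_ne_zero_iff _ hAhat.algebraMap_injective).2 hπA.ne_zero
  have hp : p ∈ maximalIdeal Ahat := hpA ▸ hAhat.algebraMap_mem_maximalIdeal_of_irreducible hπA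
  obtain ⟨m, l, w, hw, h⟩ :=
    hThat.exists_mul_pow_eq_pow_mul_of_mem_imageFractionField hπ ha'.ne_zero (hAF a)
  have hml : m = l := IsLocalRing.eq_of_pow_mul_eq_pow_mul hp0 hp ha'
    (hw.map (algebraMap That Ahat)) (by rw [mul_comm]; exact h)
  subst hml
  have haw : algebraMap A Ahat a = algebraMap That Ahat w :=
    mul_right_cancel₀ (pow_ne_zero m hp0) (by rw [h, mul_comm])
  obtain ⟨t, ht⟩ := hThat.exists_sub_algebraMap_mem_maximalIdeal w
  have := hThat.isLocalHom_of_map_mem_maximalIdeal hπ (algebraMap That Ahat) hp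
  refine ⟨t, (hAhat.algebraMap_mem_maximalIdeal_iff _).1 ?_⟩
  simpa [haw, ← hTA] using map_nonunit (algebraMap That Ahat) _ ht

end Unramified

theorem killing_wild_ramification_stmt11_general
    -- `R` a DVR with quotient field `K`
    (K : Type*) [Field K]
    -- `Ω = LM` with `L`, `M` finite separable extensions of `K`
    (Ω : Type*) [Field Ω] [Algebra K Ω]
    (L M : IntermediateField K Ω) (hLM : L ⊔ M = ⊤)
    -- `A` a DVR of `Ω` dominating `R`
    (A : Type*) [CommRing A] [IsDomain A] [IsDiscreteValuationRing A]
    [Algebra A Ω] [IsFractionRing A Ω]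
    -- `S = A ∩ L`
    (S : Type*) [CommRing S] [Algebra S A]
    (hSL : ∀ a : A, algebraMap A Ω a ∈ L ↔ ∃ s : S, algebraMap S A s = a)
    -- `T = A ∩ M`
    (T : Type*) [CommRing T] [IsDomain T] [IsDiscreteValuationRing T] [Algebra T A]
    (hT : Function.Injective (algebraMap T A))
    (hTM : ∀ a : A, algebraMap A Ω a ∈ M ↔ ∃ t : T, algebraMap T A t = a)
    -- the completions `Ŝ`, `T̂`, `Â`
    (Shat : Type*) [CommRing Shat] [Algebra S Shat]
    (That : Type*) [CommRing That] [IsLocalRing That] [Algebra T That]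
    (hThat : IsCompletionHom T That)
    (Ahat : Type*) [CommRing Ahat] [IsLocalRing Ahat] [IsDomain Ahat] [Algebra A Ahat]
    (hAhat : IsCompletionHom A Ahat)
    -- the induced maps `Ŝ → Â` and `T̂ → Â` of completions
    [Algebra Shat Ahat] [Algebra That Ahat]
    (hSA : ∀ s : S, algebraMap Shat Ahat (algebraMap S Shat s) =
      algebraMap A Ahat (algebraMap S A s))
    (hTA : ∀ t : T, algebraMap That Ahat (algebraMap T That t) =
      algebraMap A Ahat (algebraMap T A t))
    -- `QF(Ŝ) ⊆ QF(T̂)` inside `QF(Â)`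
    (hsub : Set.range (fun s : Shat => algebraMap Ahat (FractionRing Ahat)
        (algebraMap Shat Ahat s)) ⊆
      (Subfield.closure (Set.range (fun t : That => algebraMap Ahat (FractionRing Ahat)
        (algebraMap That Ahat t))) : Set (FractionRing Ahat))) :
    -- `A/T` is unramified
    Ideal.map (algebraMap T A) (maximalIdeal T) = maximalIdeal A ∧
      ∀ a : A, ∃ t : T, a - algebraMap T A t ∈ maximalIdeal A := by
  let g : Ω →+* FractionRing Ahat :=
    IsFractionRing.lift (g := (algebraMap Ahat (FractionRing Ahat)).comp (algebraMap A Ahat))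
      ((IsFractionRing.injective Ahat (FractionRing Ahat)).comp hAhat.algebraMap_injective)
  have hg (a : A) : g (algebraMap A Ω a) =
      algebraMap Ahat (FractionRing Ahat) (algebraMap A Ahat a) :=
    IsFractionRing.lift_algebraMap _ a
  have hLF : L.toSubfield ≤ (imageFractionField That Ahat).comap g :=
    Subfield.le_comap_of_valuationRing g fun a ha => by
      obtain ⟨s, rfl⟩ := (hSL a).1 ha
      rw [hg, ← hSA]
      exact hsub ⟨_, rfl⟩
  have hMF : M.toSubfield ≤ (imageFractionField That Ahat).comap g :=
    Subfield.le_comap_of_valuationRing g fun a ha => by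
      obtain ⟨t, rfl⟩ := (hTM a).1 ha
      rw [hg, ← hTA]
      exact Subfield.subset_closure ⟨_, rfl⟩
  have hAF (a : A) : algebraMap Ahat (FractionRing Ahat) (algebraMap A Ahat a) ∈
      imageFractionField That Ahat := by
    rw [← hg, ← Subfield.mem_comap, IntermediateField.eq_top_of_le_of_sup_eq_top hLM hLF hMF]
    trivial
  obtain ⟨π, hπ⟩ := IsDiscreteValuationRing.exists_irreducible T
  have hπA := irreducible_algebraMap_of_forall_mem_imageFractionField hThat hAhat hTA hT hAF hπ
  exact ⟨map_maximalIdeal_eq_of_irreducible_algebraMap hπ hπA,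
    exists_sub_algebraMap_mem_maximalIdeal_of_forall_mem_imageFractionField hThat hAhat hTA hAF
      hπ hπA⟩

theorem killing_wild_ramification_stmt11
    -- `R` a DVR with quotient field `K`
    (R K : Type*) [CommRing R] [IsDomain R] [IsDiscreteValuationRing R]
    [Field K] [Algebra R K] [IsFractionRing R K]
    -- `Ω = LM` with `L`, `M` finite separable extensions of `K`
    (Ω : Type*) [Field Ω] [Algebra K Ω] [FiniteDimensional K Ω]
    [Algebra.IsSeparable K Ω]
    (L M : IntermediateField K Ω) (hLM : L ⊔ M = ⊤)
    -- `A` a DVR of `Ω` dominating `R`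
    (A : Type*) [CommRing A] [IsDomain A] [IsDiscreteValuationRing A]
    [Algebra A Ω] [IsFractionRing A Ω]
    [Algebra R A] [Algebra R Ω] [Algebra R K] [IsScalarTower R A Ω] [IsScalarTower R K Ω]
    (hdom : ∀ r : R, algebraMap R A r ∈ maximalIdeal A ↔ r ∈ maximalIdeal R)
    -- `S = A ∩ L`
    (S : Type*) [CommRing S] [IsDomain S] [IsDiscreteValuationRing S]
    [Algebra S A] [Algebra S Ω] [IsScalarTower S A Ω]
    (hS : Function.Injective (algebraMap S A))
    (hSL : ∀ a : A, algebraMap A Ω a ∈ L ↔ ∃ s : S, algebraMap S A s = a)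
    -- `T = A ∩ M`
    (T : Type*) [CommRing T] [IsDomain T] [IsDiscreteValuationRing T]
    [Algebra T A] [Algebra T Ω] [IsScalarTower T A Ω]
    (hT : Function.Injective (algebraMap T A))
    (hTM : ∀ a : A, algebraMap A Ω a ∈ M ↔ ∃ t : T, algebraMap T A t = a)
    -- the completions `Ŝ`, `T̂`, `Â`
    (Shat : Type*) [CommRing Shat] [IsLocalRing Shat] [Algebra S Shat]
    (hShat : IsCompletionHom S Shat)
    (That : Type*) [CommRing That] [IsLocalRing That] [Algebra T That]
    (hThat : IsCompletionHom T That)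
    (Ahat : Type*) [CommRing Ahat] [IsLocalRing Ahat] [IsDomain Ahat] [Algebra A Ahat]
    (hAhat : IsCompletionHom A Ahat)
    -- the induced maps `Ŝ → Â` and `T̂ → Â` of completions
    [Algebra Shat Ahat] [Algebra That Ahat]
    (hSA : ∀ s : S, algebraMap Shat Ahat (algebraMap S Shat s) =
      algebraMap A Ahat (algebraMap S A s))
    (hTA : ∀ t : T, algebraMap That Ahat (algebraMap T That t) =
      algebraMap A Ahat (algebraMap T A t))
    -- the residue field of `A` equals that of `S`
    (hres : ∀ a : A, ∃ s : S, a - algebraMap S A s ∈ maximalIdeal A)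
    -- `QF(Ŝ) ⊆ QF(T̂)` inside `QF(Â)`
    (hsub : Set.range (fun s : Shat => algebraMap Ahat (FractionRing Ahat)
        (algebraMap Shat Ahat s)) ⊆
      (Subfield.closure (Set.range (fun t : That => algebraMap Ahat (FractionRing Ahat)
        (algebraMap That Ahat t))) : Set (FractionRing Ahat))) :
    -- `A/T` is unramified
    Ideal.map (algebraMap T A) (maximalIdeal T) = maximalIdeal A ∧
      ∀ a : A, ∃ t : T, a - algebraMap T A t ∈ maximalIdeal A :=
  killing_wild_ramification_stmt11_general K Ω L M hLM A S hSL T hT hTM Shat That hThat Ahat hAhat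
    hSA hTA hsub
end
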